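/- Let p ∈ P(k,k) be projective with through-block decomposition p = p_u* p_u, and let q ∈ P(k,k) satisfy pq = q = qp and t(q) = t(p). Then there exists a through-partition r ∈ P_2(t(p), t(p)) such that q = p_u* r p_u. -/

import Mathlib

/-- A two-row partition with `k` upper and `l` lower points, encoded as the
equivalence relation whose classes are the blocks. -/
abbrev PP (k l : ℕ) := Setoid (Fin k ⊕ Fin l)

/-- The involution `p*` (turning `p` upside down). -/
def swapP {k l : ℕ} (p : PP k l) : PP l k := Setoid.comap Sum.swap p

/-- Disjoint union of two setoids. -/
def sumSetoid {α β : Type*} (s : Setoid α) (t : Setoid β) : Setoid (α ⊕ β) where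
  r := Sum.LiftRel s.r t.r
  iseqv := by
    refine ⟨fun x => ?_, fun {x y} h => ?_, fun {x y z} h1 h2 => ?_⟩
    · cases x with
      | inl a => exact Sum.LiftRel.inl (s.iseqv.refl a)
      | inr b => exact Sum.LiftRel.inr (t.iseqv.refl b)
    · cases h with
      | inl h => exact Sum.LiftRel.inl (s.iseqv.symm h)
      | inr h => exact Sum.LiftRel.inr (t.iseqv.symm h)
    · cases h1 with
      | inl h1 =>
        cases h2 with
        | inl h2 => exact Sum.LiftRel.inl (s.iseqv.trans h1 h2)
      | inr h1 =>
        cases h2 with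
        | inr h2 => exact Sum.LiftRel.inr (t.iseqv.trans h1 h2)

/-- Reindexing equivalence for the horizontal concatenation (tensor product). -/
def tensorEquiv (k l k' l' : ℕ) :
    (Fin (k + k') ⊕ Fin (l + l')) ≃ ((Fin k ⊕ Fin l) ⊕ (Fin k' ⊕ Fin l')) :=
  (Equiv.sumCongr finSumFinEquiv.symm finSumFinEquiv.symm).trans
    (Equiv.sumSumSumComm (Fin k) (Fin k') (Fin l) (Fin l'))

/-- Tensor product (horizontal concatenation) of partitions. -/
def tensorP {k l k' l' : ℕ} (p : PP k l) (q : PP k' l') : PP (k + k') (l + l') :=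
  Setoid.comap (tensorEquiv k l k' l') (sumSetoid p q)

/-- The relation on `k ⊔ l ⊔ m` points generated by `p` (upper part) and `q` (lower part). -/
def midRel {k l m : ℕ} (p : PP k l) (q : PP l m) :
    (Fin k ⊕ (Fin l ⊕ Fin m)) → (Fin k ⊕ (Fin l ⊕ Fin m)) → Prop := fun x y =>
  (∃ a b : Fin k ⊕ Fin l, p.r a b ∧ x = Sum.map id Sum.inl a ∧ y = Sum.map id Sum.inl b) ∨
  (∃ a b : Fin l ⊕ Fin m, q.r a b ∧ x = Sum.inr a ∧ y = Sum.inr b)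

/-- The equivalence relation generated on `k ⊔ l ⊔ m` in the composition procedure. -/
def bigS {k l m : ℕ} (p : PP k l) (q : PP l m) : Setoid (Fin k ⊕ (Fin l ⊕ Fin m)) :=
  Relation.EqvGen.setoid (midRel p q)

/-- `compP q p` is the vertical composition `qp` (apply `p : P(k,l)` first, then `q : P(l,m)`). -/
def compP {k l m : ℕ} (q : PP l m) (p : PP k l) : PP k m :=
  Setoid.comap (Sum.map id Sum.inr) (bigS p q)

/-- `rlP q p` : the number of closed loops removed in the composition `qp`,
i.e. the blocks of the generated relation consisting only of middle points. -/
noncomputable def rlP {k l m : ℕ} (q : PP l m) (p : PP k l) : ℕ :=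
  Nat.card {c : Quotient (bigS p q) //
    ∀ x, Quotient.mk (bigS p q) x = c → ∃ b : Fin l, x = Sum.inr (Sum.inl b)}

/-- `b(p)` : number of blocks. -/
noncomputable def bP {k l : ℕ} (p : PP k l) : ℕ := Nat.card (Quotient p)

/-- `t(p)` : number of through-blocks (blocks meeting both rows). -/
noncomputable def tP {k l : ℕ} (p : PP k l) : ℕ :=
  Nat.card {c : Quotient p // (∃ a : Fin k, Quotient.mk p (Sum.inl a) = c) ∧
    (∃ b : Fin l, Quotient.mk p (Sum.inr b) = c)}

/-- `β(p) = b(p) - t(p)` : number of non-through-blocks. -/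
noncomputable def betaP {k l : ℕ} (p : PP k l) : ℕ := bP p - tP p

/-- The identity partition `|^{⊗k}`. -/
def idP (k : ℕ) : PP k k := Setoid.ker (Sum.elim (fun i : Fin k => i) (fun i : Fin k => i))

/-- A pair partition: all blocks have size two. -/
def isPair {k l : ℕ} (p : PP k l) : Prop := ∀ x, Nat.card {y // p.r x y} = 2

/-- A through-partition: a pair partition each of whose blocks connects exactly one
upper point to exactly one lower point. -/
def isThrough {k : ℕ} (p : PP k k) : Prop :=
  isPair p ∧ (∀ a b : Fin k, p.r (Sum.inl a) (Sum.inl b) → a = b) ∧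
    (∀ a b : Fin k, p.r (Sum.inr a) (Sum.inr b) → a = b)

/-- A building partition. -/
def isBuilding {k l : ℕ} (p : PP k l) : Prop :=
  (∀ b b' : Fin l, p.r (Sum.inr b) (Sum.inr b') → b = b') ∧
  (∀ b : Fin l, ∃ a : Fin k, p.r (Sum.inl a) (Sum.inr b)) ∧
  (∀ b b' : Fin l, ∀ a a' : Fin k, b < b' →
    IsLeast {x : Fin k | p.r (Sum.inl x) (Sum.inr b)} a →
    IsLeast {x : Fin k | p.r (Sum.inl x) (Sum.inr b')} a' → a < a')

/-- A projective partition: symmetric and idempotent. -/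
def isProjective {k : ℕ} (p : PP k k) : Prop := swapP p = p ∧ compP p p = p

/-- Linear position of the points, reading the upper row left to right and then the
lower row right to left. -/
def posP (k l : ℕ) : Fin k ⊕ Fin l → ℕ :=
  Sum.elim (fun i => (i : ℕ)) (fun j => k + (l - 1 - (j : ℕ)))

/-- Noncrossing partitions. -/
def isNC {k l : ℕ} (p : PP k l) : Prop :=
  ¬ ∃ x1 x2 x3 x4 : Fin k ⊕ Fin l,
    posP k l x1 < posP k l x2 ∧ posP k l x2 < posP k l x3 ∧ posP k l x3 < posP k l x4 ∧
    p.r x1 x3 ∧ p.r x2 x4 ∧ ¬ p.r x1 x2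

/-!
Put `r = p_u q p_u*`. From `p = p_u* p_u` and `pq = q = qp`, associativity of composition gives
`p_u q = r p_u` and hence `q = p_u* r p_u`. Composition cannot increase the number of
through-blocks, so `t(p) = t(q) ≤ t(r) ≤ t(p)`; and a partition in `P(t, t)` with `t`
through-blocks pairs every upper point with exactly one lower point, i.e. is a through-partition.

Associativity is proved by identifying both bracketings of `c b a` with the partition read off
four stacked rows, using a Beck–Chevalley identity for pushing and pulling equivalence relations
along the inclusions of rows.
-/

namespace Setoid

variable {α β γ δ : Type*}

theorem gc_map_comap (f : α → β) : GaloisConnection (fun r : Setoid α => r.map f) (comap f) :=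
  fun _ _ => ⟨fun h => le_comap_map.trans fun _ _ hxy => h hxy,
    fun h => eqvGen_le fun _ _ ⟨_, _, hab, ha, hb⟩ => ha ▸ hb ▸ h hab⟩

theorem map_sup (r s : Setoid α) (f : α → β) : (r ⊔ s).map f = r.map f ⊔ s.map f :=
  (gc_map_comap f).l_sup

theorem map_map (r : Setoid α) (f : α → β) (g : β → γ) : (r.map f).map g = r.map (g ∘ f) :=
  ((gc_map_comap f).compose (gc_map_comap g)).l_unique (gc_map_comap (g ∘ f)) fun _ => rfl

theorem comap_sup_map (s : Setoid β) (r : Setoid α) (f : α → β) :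
    (s ⊔ r.map f).comap f = s.comap f ⊔ r := by
  set T := s.comap f ⊔ r
  have hsT : s.comap f ≤ T := le_sup_left
  -- a chain from `f u` to `f v` leaves the range of `f` only along `s`-steps
  let R : Setoid β :=
    { r := fun x y => s x y ∨ ∃ u v, s x (f u) ∧ T u v ∧ s (f v) y
      iseqv := by
        refine ⟨fun x => .inl (s.refl' x), ?_, ?_⟩
        · rintro x y (h | ⟨u, v, hu, huv, hv⟩)
          · exact .inl (s.symm' h)
          · exact .inr ⟨v, u, s.symm' hv, T.symm' huv, s.symm' hu⟩
        · rintro x y z (hxy | ⟨u, v, hu, huv, hv⟩) (hyz | ⟨u', v', hu', huv', hv'⟩)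
          · exact .inl (s.trans' hxy hyz)
          · exact .inr ⟨u', v', s.trans' hxy hu', huv', hv'⟩
          · exact .inr ⟨u, v, hu, huv, s.trans' hv hyz⟩
          · exact .inr ⟨u, v', hu,
              T.trans' (T.trans' huv (hsT (s.trans' hv hu'))) huv', hv'⟩ }
  refine le_antisymm (fun u v huv => ?_) (sup_le ((gc_map_comap f).monotone_u le_sup_left) ?_)
  · have hle : s ⊔ r.map f ≤ R :=
      sup_le (fun _ _ h => .inl h) ((gc_map_comap f).le_iff_le.2 fun a b h =>
        .inr ⟨a, b, s.refl' _, le_sup_right (a := s.comap f) h, s.refl' _⟩)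
    rcases hle huv with h | ⟨u', v', hu, huv', hv⟩
    · exact hsT h
    · exact T.trans' (T.trans' (hsT hu) huv') (hsT hv)
  · exact le_comap_map.trans ((gc_map_comap f).monotone_u le_sup_right)

/-- Beck–Chevalley for a pullback square of injections. -/
theorem comap_map_eq_map_comap_of_pullback {o : α → β} {i : α → γ} {E : β → δ} {J : γ → δ}
    (hE : E.Injective) (hJ : J.Injective) (hcomm : J ∘ i = E ∘ o)
    (hpb : ∀ x y, E x = J y → ∃ a, o a = x ∧ i a = y) (s : Setoid β) :
    (s.map E).comap J = (s.comap o).map i := by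
  refine le_antisymm (fun y y' h => ?_) ((gc_map_comap i).le_iff_le.2 fun a a' h => ?_)
  · rw [comap_rel, coe_map_of_ker_le _ _ (ker_eq_bot_iff.2 hE ▸ bot_le)] at h
    rcases h with ⟨x, x', hxx', hx, hx'⟩ | h
    · obtain ⟨a, rfl, rfl⟩ := hpb x y hx
      obtain ⟨a', rfl, rfl⟩ := hpb x' y' hx'
      exact Relation.EqvGen.rel _ _ ⟨a, a', hxx', rfl, rfl⟩
    · exact hJ h ▸ (s.comap o |>.map i).refl' y
  · show s.map E (J (i a)) (J (i a'))
    rw [← Function.comp_apply (f := J), ← Function.comp_apply (f := J), hcomm]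
    exact le_comap_map h

end Setoid

section Composition

variable {k l m n : ℕ}

theorem bigS_eq_sup (p : PP k l) (q : PP l m) :
    bigS p q = p.map (Sum.map id Sum.inl) ⊔ q.map Sum.inr := by
  refine le_antisymm (Setoid.eqvGen_le ?_) (sup_le ?_ ?_)
  · rintro _ _ (⟨a, b, h, rfl, rfl⟩ | ⟨a, b, h, rfl, rfl⟩)
    · exact le_sup_left (b := q.map Sum.inr) (Setoid.le_comap_map h)
    · exact le_sup_right (a := p.map (Sum.map id Sum.inl)) (Setoid.le_comap_map h)
  · exact (Setoid.gc_map_comap _).le_iff_le.2 fun a b h =>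
      Relation.EqvGen.rel _ _ (.inl ⟨a, b, h, rfl, rfl⟩)
  · exact (Setoid.gc_map_comap _).le_iff_le.2 fun a b h =>
      Relation.EqvGen.rel _ _ (.inr ⟨a, b, h, rfl, rfl⟩)

/-- The composition `c b a` of three stacked partitions, read off the four rows
`Fin k ⊕ (Fin l ⊕ (Fin m ⊕ Fin n))`. -/
def compP₃ (a : PP k l) (b : PP l m) (c : PP m n) : PP k n :=
  (a.map (Sum.map id Sum.inl) ⊔ b.map (Sum.inr ∘ Sum.map id Sum.inl) ⊔
    c.map (Sum.inr ∘ Sum.inr)).comap (Sum.map id (Sum.inr ∘ Sum.inr))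

theorem compP_compP_eq_compP₃ (a : PP k l) (b : PP l m) (c : PP m n) :
    compP c (compP b a) = compP₃ a b c := by
  have hbc := Setoid.comap_map_eq_map_comap_of_pullback
    (o := Sum.map (id : Fin k → Fin k) (Sum.inr : Fin m → Fin l ⊕ Fin m))
    (i := Sum.map id (Sum.inl : Fin m → Fin m ⊕ Fin n))
    (E := Sum.map id (Sum.map id (Sum.inl : Fin m → Fin m ⊕ Fin n)))
    (J := Sum.map id (Sum.inr : Fin m ⊕ Fin n → Fin l ⊕ (Fin m ⊕ Fin n)))
    (Sum.map_injective.2 ⟨Function.injective_id,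
      Sum.map_injective.2 ⟨Function.injective_id, Sum.inl_injective⟩⟩)
    (Sum.map_injective.2 ⟨Function.injective_id, Sum.inr_injective⟩)
    (by funext x; rcases x with _ | _ <;> rfl)
    (by rintro (_ | _ | _) (_ | _ | _) h <;> simp at h <;> subst h <;> simp) (bigS a b)
  unfold compP
  rw [bigS_eq_sup _ c, ← hbc, ← Setoid.comap_sup_map, Setoid.map_map, bigS_eq_sup,
    Setoid.map_sup, Setoid.map_map, Setoid.map_map, ← Setoid.comap_comp, Sum.map_comp_map,
    Sum.map_comp_map]
  rfl

theorem compP_compP_eq_compP₃' (a : PP k l) (b : PP l m) (c : PP m n) :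
    compP (compP c b) a = compP₃ a b c := by
  have hab := Setoid.comap_map_eq_map_comap_of_pullback
    (o := Sum.map (id : Fin l → Fin l) (Sum.inr : Fin n → Fin m ⊕ Fin n))
    (i := (Sum.inr : Fin l ⊕ Fin n → Fin k ⊕ (Fin l ⊕ Fin n)))
    (E := (Sum.inr : Fin l ⊕ (Fin m ⊕ Fin n) → Fin k ⊕ (Fin l ⊕ (Fin m ⊕ Fin n))))
    (J := Sum.map id (Sum.map id (Sum.inr : Fin n → Fin m ⊕ Fin n)))
    Sum.inr_injective
    (Sum.map_injective.2 ⟨Function.injective_id,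
      Sum.map_injective.2 ⟨Function.injective_id, Sum.inr_injective⟩⟩)
    (by funext x; rcases x with _ | _ <;> rfl)
    (by rintro (_ | _ | _) (_ | _ | _) h <;> simp at h <;> subst h <;> simp) (bigS b c)
  unfold compP
  rw [bigS_eq_sup a, ← hab, sup_comm, ← Setoid.comap_sup_map, Setoid.map_map, bigS_eq_sup,
    Setoid.map_sup, Setoid.map_map, Setoid.map_map, ← Setoid.comap_comp, Sum.map_comp_map,
    Sum.map_comp_map, sup_comm, ← sup_assoc]
  rfl

theorem compP_assoc (a : PP k l) (b : PP l m) (c : PP m n) :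
    compP c (compP b a) = compP (compP c b) a := by
  rw [compP_compP_eq_compP₃, compP_compP_eq_compP₃']

end Composition

section ThroughBlocks

variable {k l m : ℕ}

theorem rel_compP_inl_inl {a : PP k l} (b : PP l m) {x x' : Fin k}
    (h : a.r (Sum.inl x) (Sum.inl x')) : (compP b a).r (Sum.inl x) (Sum.inl x') :=
  Relation.EqvGen.rel _ _ (.inl ⟨_, _, h, rfl, rfl⟩)

theorem rel_compP_inr_inr (a : PP k l) {b : PP l m} {y y' : Fin m}
    (h : b.r (Sum.inr y) (Sum.inr y')) : (compP b a).r (Sum.inr y) (Sum.inr y') :=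
  Relation.EqvGen.rel _ _ (.inr ⟨_, _, h, rfl, rfl⟩)

theorem exists_rel_inl_inr_left_of_compP {a : PP k l} {b : PP l m} {x : Fin k} {y : Fin m}
    (h : (compP b a).r (Sum.inl x) (Sum.inr y)) : ∃ z, a.r (Sum.inl x) (Sum.inr z) := by
  by_contra! hx
  -- the indicator of the `a`-block of `x` is invariant along the composition
  let f : Fin k ⊕ (Fin l ⊕ Fin m) → Prop :=
    Sum.elim (fun x' => a.r (Sum.inl x) (Sum.inl x'))
      (Sum.elim (fun z => a.r (Sum.inl x) (Sum.inr z)) fun _ => False)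
  have hf : bigS a b ≤ Setoid.ker f := by
    rw [bigS_eq_sup]
    refine sup_le ((Setoid.gc_map_comap _).le_iff_le.2 ?_)
      ((Setoid.gc_map_comap _).le_iff_le.2 ?_)
    · rintro (_ | _) (_ | _) hab <;>
        exact propext ⟨fun h' => a.trans' h' hab, fun h' => a.trans' h' (a.symm' hab)⟩
    · rintro (z | _) (z' | _) - <;> simp [f, hx]
  have hfx : f (Sum.inl x) = False := hf h
  exact hfx ▸ a.refl' _

theorem exists_rel_inl_inr_right_of_compP {a : PP k l} {b : PP l m} {x : Fin k} {y : Fin m}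
    (h : (compP b a).r (Sum.inl x) (Sum.inr y)) : ∃ z, b.r (Sum.inl z) (Sum.inr y) := by
  by_contra! hy
  let f : Fin k ⊕ (Fin l ⊕ Fin m) → Prop :=
    Sum.elim (fun _ => False)
      (Sum.elim (fun z => b.r (Sum.inl z) (Sum.inr y)) fun y' => b.r (Sum.inr y') (Sum.inr y))
  have hf : bigS a b ≤ Setoid.ker f := by
    rw [bigS_eq_sup]
    refine sup_le ((Setoid.gc_map_comap _).le_iff_le.2 ?_)
      ((Setoid.gc_map_comap _).le_iff_le.2 ?_)
    · rintro (_ | _) (_ | _) - <;> simp [f, hy]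
    · rintro (_ | _) (_ | _) hab <;>
        exact propext ⟨fun h' => b.trans' (b.symm' hab) h', fun h' => b.trans' hab h'⟩
  have hfy : False = f (Sum.inr (Sum.inr y)) := hf h
  exact hfy ▸ b.refl' _

theorem tP_swapP (p : PP k l) : tP (swapP p) = tP p := by
  let e : Quotient (swapP p) ≃ Quotient p :=
    Quotient.congr (Equiv.sumComm _ _) fun _ _ => Iff.rfl
  refine Nat.card_congr (e.subtypeEquiv fun c => ?_)
  induction c using Quotient.inductionOn with | h w => ?_
  change _ ↔ (∃ a, Quotient.mk p (Sum.inl a) = Quotient.mk p w.swap) ∧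
    ∃ b, Quotient.mk p (Sum.inr b) = Quotient.mk p w.swap
  simp only [Quotient.eq]
  exact and_comm

theorem tP_le_tP_of_inl {p : PP k l} {p' : PP k m}
    (hthrough : ∀ x y, p.r (Sum.inl x) (Sum.inr y) → ∃ y', p'.r (Sum.inl x) (Sum.inr y'))
    (hupper : ∀ x x', p'.r (Sum.inl x) (Sum.inl x') → p.r (Sum.inl x) (Sum.inl x')) :
    tP p ≤ tP p' := by
  refine Nat.card_le_card_of_injective
    (fun c => ⟨Quotient.mk p' (Sum.inl c.2.1.choose), ⟨_, rfl⟩, ?_⟩) fun c c' hcc' => ?_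
  · obtain ⟨y', hy'⟩ := hthrough _ c.2.2.choose
      (Quotient.exact (c.2.1.choose_spec.trans c.2.2.choose_spec.symm))
    exact ⟨y', Quotient.sound (p'.symm' hy')⟩
  · refine Subtype.ext (c.2.1.choose_spec.symm.trans (Eq.trans ?_ c'.2.1.choose_spec))
    exact Quotient.sound (hupper _ _ (Quotient.exact (congrArg Subtype.val hcc')))

theorem tP_compP_le_left (a : PP k l) (b : PP l m) : tP (compP b a) ≤ tP a :=
  tP_le_tP_of_inl (fun _ _ h => exists_rel_inl_inr_left_of_compP h)
    fun _ _ h => rel_compP_inl_inl b h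

theorem tP_compP_le_right (a : PP k l) (b : PP l m) : tP (compP b a) ≤ tP b := by
  rw [← tP_swapP, ← tP_swapP b]
  exact tP_le_tP_of_inl
    (fun _ _ h => (exists_rel_inl_inr_right_of_compP ((compP b a).symm' h)).imp
      fun _ => b.symm')
    fun _ _ h => rel_compP_inr_inr a h

end ThroughBlocks

theorem range_eq_and_injective_of_subset_range {ι α : Type*} [Finite ι] {f : ι → α} {s : Set α}
    (hs : s ⊆ Set.range f) (hcard : Nat.card s = Nat.card ι) :
    Set.range f = s ∧ f.Injective := by
  have hrange : Nat.card (Set.range f) ≤ Nat.card s := hcard ▸ Finite.card_range_le f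
  have hs_eq : s = Set.range f := Set.eq_of_subset_of_ncard_le hs
    (by rwa [← Nat.card_coe_set_eq, ← Nat.card_coe_set_eq]) (Set.finite_range f)
  exact ⟨hs_eq.symm, Set.rangeFactorization_injective.1
    (Set.rangeFactorization_surjective.bijective_of_nat_card_le (hs_eq ▸ hcard).ge).1⟩

section ThroughPartition

variable {k l : ℕ}

def throughBlocks (p : PP k l) : Set (Quotient p) :=
  {c | (∃ a, Quotient.mk p (Sum.inl a) = c) ∧ ∃ b, Quotient.mk p (Sum.inr b) = c}

theorem throughBlocks_subset_range (p : PP k l) :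
    throughBlocks p ⊆ Set.range fun a => Quotient.mk p (Sum.inl a) :=
  fun _ hc => hc.1

theorem tP_le (p : PP k l) : tP p ≤ k :=
  (Nat.card_mono (Set.finite_range _) (throughBlocks_subset_range p)).trans
    ((Finite.card_range_le _).trans (Nat.card_fin k).le)

theorem inl_injective_and_through_of_tP_eq {p : PP k l} (h : tP p = k) :
    (∀ x x', p.r (Sum.inl x) (Sum.inl x') → x = x') ∧
      ∀ x, ∃ y, p.r (Sum.inl x) (Sum.inr y) := by
  obtain ⟨hrange, hinj⟩ := range_eq_and_injective_of_subset_range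
    (throughBlocks_subset_range p) (h.trans (Nat.card_fin k).symm)
  refine ⟨fun x x' hxx' => hinj (Quotient.sound hxx'), fun x => ?_⟩
  obtain ⟨-, y, hy⟩ := hrange.subset ⟨x, rfl⟩
  exact ⟨y, p.symm' (Quotient.exact hy)⟩

theorem isThrough_of_tP_eq {r : PP k k} (h : tP r = k) : isThrough r := by
  obtain ⟨hinl, hthrough⟩ := inl_injective_and_through_of_tP_eq h
  obtain ⟨hinr, hthrough'⟩ := inl_injective_and_through_of_tP_eq ((tP_swapP r).trans h)
  refine ⟨fun z => ?_, hinl, hinr⟩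
  have hblock : ∃ x y, r.r z (Sum.inl x) ∧ r.r z (Sum.inr y) := by
    rcases z with x | y
    · obtain ⟨y, hy⟩ := hthrough x
      exact ⟨x, y, r.refl' _, hy⟩
    · obtain ⟨x, hx⟩ := hthrough' y
      exact ⟨x, y, hx, r.refl' _⟩
  obtain ⟨x, y, hx, hy⟩ := hblock
  have hclass : {w | r.r z w} = {Sum.inl x, Sum.inr y} := by
    ext (x' | y') <;> simp only [Set.mem_ofPred_eq, Set.mem_insert_iff, Set.mem_singleton_iff,
      Sum.inl.injEq, Sum.inr.injEq, reduceCtorEq, or_false, false_or]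
    · exact ⟨fun h' => (hinl _ _ (r.trans' (r.symm' hx) h')).symm, fun h' => h' ▸ hx⟩
    · exact ⟨fun h' => (hinr _ _ (r.trans' (r.symm' hy) h')).symm, fun h' => h' ▸ hy⟩
  rw [← Set.ncard_pair Sum.inl_ne_inr, ← hclass, ← Nat.card_coe_set_eq]
  rfl

end ThroughPartition

theorem middle_through_partition_general {k : ℕ} (p : PP k k)
    (pu : PP k (tP p)) (hdec : p = compP (swapP pu) pu)
    (q : PP k k) (h1 : compP p q = q) (h2 : compP q p = q) (ht : tP q = tP p) :
    ∃ r : PP (tP p) (tP p), isThrough r ∧ q = compP (swapP pu) (compP r pu) := by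
  let r := compP pu (compP q (swapP pu))
  have hr : compP r pu = compP pu q := by
    rw [← compP_assoc, ← compP_assoc, ← hdec, h2]
  have hq : q = compP (swapP pu) (compP r pu) := by
    rw [hr, compP_assoc, ← hdec, h1]
  have htr : tP p ≤ tP r :=
    calc tP p = tP q := ht.symm
      _ ≤ tP (compP r pu) := hq ▸ tP_compP_le_left (compP r pu) (swapP pu)
      _ ≤ tP r := tP_compP_le_right pu r
  exact ⟨r, isThrough_of_tP_eq ((tP_le r).antisymm htr), hq⟩

/-- if `p` is projective with through-block decomposition `p = p_u* p_u`
and `pq = q = qp` with `t(q) = t(p)`, then `q = p_u* r p_u` for a through-partition `r`. -/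
theorem middle_through_partition {k : ℕ} (p : PP k k) (hp : isProjective p)
    (pu : PP k (tP p)) (hpu : isBuilding pu) (hdec : p = compP (swapP pu) pu)
    (q : PP k k) (h1 : compP p q = q) (h2 : compP q p = q) (ht : tP q = tP p) :
    ∃ r : PP (tP p) (tP p), isThrough r ∧ q = compP (swapP pu) (compP r pu) :=
  middle_through_partition_general p pu hdec q h1 h2 ht
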